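/- (Asymptotics of the nonlinearity parameter c) Fix real constants α ≠ 0, q, K₃, K₄, set β = 0, and define N₁(δ) = α − 2 sin²δ [ 2K₃ (2(1+cos²δ) − 3)(2cos²δ − 1)² + K₄ (2cos²δ − 1) ] and N₃(δ) = 4 sin⁴δ ( K₃ (2cos²δ − 1)² + 2q ) (the modified-fiber coefficients with β = 0). Then the nonlinearity parameter c(δ) = N₃(δ)/N₁(δ) is defined for all sufficiently small δ and satisfies c(δ) = (4/α)( K₃ + 2q ) δ⁴ + O(δ⁶) as δ → 0. -/

import Mathlib

/-!
Write `A = 4(K₃ + 2q)`. Since `(2cos²δ − 1)² = 1 − 4 sin²δ cos²δ`, one has exactly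
`N₃ = A sin⁴δ − 16 K₃ sin⁶δ cos²δ`, and `|sin δ − δ| ≤ |δ|³/6` turns this into
`N₃ = A δ⁴ + O(δ⁶)`. Every correction in `N₁` carries a factor `sin²δ`, so `N₁ = α + O(δ²)`.
Then `N₃/N₁ − (A/α)δ⁴ = (N₃ − Aδ⁴)/N₁ − (A/α) δ⁴ (N₁ − α)/N₁`, with `1/N₁` bounded near `0`.
-/

noncomputable section

open Real Filter Asymptotics

/-- Coefficient `N₁(δ)` of the modified-fiber wave equation at pitch angle `β = 0`. -/
def N1h (α K₃ K₄ : ℝ) (δ : ℝ) : ℝ :=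
  α - 2 * Real.sin δ ^ 2 *
    (2 * K₃ * (2 * (1 + Real.cos δ ^ 2) - 3) * (2 * Real.cos δ ^ 2 - 1) ^ 2
      + K₄ * (2 * Real.cos δ ^ 2 - 1))

/-- Coefficient `N₃(δ)` of the modified-fiber wave equation at pitch angle `β = 0`. -/
def N3h (q K₃ : ℝ) (δ : ℝ) : ℝ :=
  4 * Real.sin δ ^ 4 * (K₃ * (2 * Real.cos δ ^ 2 - 1) ^ 2 + 2 * q)

open scoped Topology

namespace Asymptotics

variable {α 𝕜 : Type*} [NormedField 𝕜] {l : Filter α}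

theorem IsBigO.pow_succ_sub_pow_succ {f g u v : α → 𝕜}
    (hfg : (fun x => f x - g x) =O[l] u) (hf : f =O[l] v) (hg : g =O[l] v) (n : ℕ) :
    (fun x => f x ^ (n + 1) - g x ^ (n + 1)) =O[l] fun x => u x * v x ^ n := by
  have hsum : (fun x => ∑ i ∈ Finset.range (n + 1), f x ^ i * g x ^ (n - i)) =O[l]
      fun x => v x ^ n := by
    refine IsBigO.fun_sum fun i hi => ?_
    have hin : i + (n - i) = n := Nat.add_sub_cancel' (Nat.lt_succ_iff.mp (Finset.mem_range.mp hi))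
    simpa only [← pow_add, hin] using (hf.pow i).mul (hg.pow (n - i))
  refine (hsum.mul hfg).congr (fun x => ?_) fun x => mul_comm _ _
  simpa using geom_sum₂_mul (f x) (g x) (n + 1)

theorem div_sub_mul_isBigO {f g p r : α → 𝕜} {a b : 𝕜} (hb : b ≠ 0)
    (hf : (fun x => f x - a * p x) =O[l] fun x => p x * r x)
    (hg : (fun x => g x - b) =O[l] r) (hg_lim : Tendsto g l (𝓝 b)) :
    (fun x => f x / g x - a / b * p x) =O[l] fun x => p x * r x := by
  have hinv : (fun x => (g x)⁻¹) =O[l] fun _ => (1 : 𝕜) :=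
    (hg_lim.inv₀ hb).isBigO_one 𝕜
  have hmain := (hf.mul hinv).sub
    (((isBigO_refl p l).mul hg).mul hinv |>.const_mul_left (a / b))
  refine hmain.congr' ?_ (by simp)
  filter_upwards [hg_lim.eventually_ne hb] with x hx
  field_simp
  ring

end Asymptotics

namespace Real

theorem abs_sin_sub_self_le (x : ℝ) : |sin x - x| ≤ |x| ^ 3 / 6 := by
  have key : ∀ y : ℝ, 0 ≤ y → |sin y - y| ≤ y ^ 3 / 6 := fun y hy => by
    rw [abs_of_nonpos (by linarith [sin_le hy])]
    linarith [sin_ge_sub_cube hy]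
  rcases le_total 0 x with hx | hx
  · simpa [abs_of_nonneg hx] using key x hx
  · have := key (-x) (by linarith)
    rw [sin_neg, show -sin x - -x = -(sin x - x) by ring, abs_neg] at this
    simpa [abs_of_nonpos hx, Odd.neg_pow (by decide : Odd 3)] using this

theorem isBigO_sin_sub_self : (fun x => sin x - x) =O[𝓝 0] fun x => x ^ 3 :=
  isBigO_of_le' (c := 1 / 6) _ fun x => by
    simpa [abs_pow, div_eq_inv_mul] using abs_sin_sub_self_le x

theorem isBigO_sin : sin =O[𝓝 0] id :=
  isBigO_of_le _ fun x => by simpa using abs_sin_le_abs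

theorem isBigO_sin_pow_mul {f : ℝ → ℝ} (hf : f =O[𝓝 0] fun _ => (1 : ℝ)) (n : ℕ) :
    (fun x => sin x ^ n * f x) =O[𝓝 0] fun x => x ^ n := by
  simpa using (isBigO_sin.pow n).mul hf

end Real

section ModifiedFiber

variable (α q K₃ K₄ : ℝ)

theorem N3h_eq (δ : ℝ) :
    N3h q K₃ δ = 4 * (K₃ + 2 * q) * sin δ ^ 4 - sin δ ^ 6 * (16 * K₃ * cos δ ^ 2) := by
  have h : (2 * cos δ ^ 2 - 1) ^ 2 = 1 - 4 * sin δ ^ 2 * cos δ ^ 2 := by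
    rw [sin_sq]; ring
  rw [N3h, h]; ring

theorem N3h_sub_isBigO :
    (fun δ => N3h q K₃ δ - 4 * (K₃ + 2 * q) * δ ^ 4) =O[𝓝 0] fun δ => δ ^ 4 * δ ^ 2 := by
  have hquartic := (isBigO_sin_sub_self.pow_succ_sub_pow_succ isBigO_sin (isBigO_refl _ _) 3)
    |>.const_mul_left (4 * (K₃ + 2 * q))
  have hsextic := isBigO_sin_pow_mul (f := fun δ => 16 * K₃ * cos δ ^ 2)
    ((Continuous.tendsto (by fun_prop) 0).isBigO_one ℝ) 6
  refine (hquartic.congr_right fun δ => ?_).sub hsextic |>.congr (fun δ => ?_) fun δ => ?_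
  · simp only [id]; ring
  · rw [N3h_eq]; ring
  · ring

theorem N1h_sub_isBigO : (fun δ => N1h α K₃ K₄ δ - α) =O[𝓝 0] fun δ => δ ^ 2 := by
  refine (isBigO_sin_pow_mul (f := fun δ => -2 * (2 * K₃ * (2 * (1 + cos δ ^ 2) - 3) *
      (2 * cos δ ^ 2 - 1) ^ 2 + K₄ * (2 * cos δ ^ 2 - 1)))
    ((Continuous.tendsto (by fun_prop) 0).isBigO_one ℝ) 2).congr (fun δ => ?_) fun _ => rfl
  rw [N1h]
  ring

theorem tendsto_N1h : Tendsto (N1h α K₃ K₄) (𝓝 0) (𝓝 α) := by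
  simpa [N1h] using ((by unfold N1h; fun_prop) : Continuous (N1h α K₃ K₄)).tendsto 0

end ModifiedFiber

/-- **asymptotics of the nonlinearity parameter `c`.** For `α ≠ 0` and
`β = 0`, the nonlinearity parameter `c(δ) = N₃(δ)/N₁(δ)` is defined (i.e. `N₁(δ) ≠ 0`)
for all sufficiently small `δ`, and
`c(δ) = (4/α)(K₃ + 2q) δ⁴ + O(δ⁶)` as `δ → 0`. -/
theorem nonlinearity_parameter_asymptotics
    (α q K₃ K₄ : ℝ) (hα : α ≠ 0) :
    (∀ᶠ δ in nhds (0 : ℝ), N1h α K₃ K₄ δ ≠ 0) ∧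
    ((fun δ => N3h q K₃ δ / N1h α K₃ K₄ δ - (4 / α) * (K₃ + 2 * q) * δ ^ 4)
      =O[nhds 0] fun δ => δ ^ 6) := by
  refine ⟨(tendsto_N1h α K₃ K₄).eventually_ne hα, ?_⟩
  refine (div_sub_mul_isBigO hα (N3h_sub_isBigO q K₃) (N1h_sub_isBigO α K₃ K₄)
    (tendsto_N1h α K₃ K₄)).congr (fun δ => ?_) fun δ => ?_ <;> ring
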